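/- For every c > 0, λ > 0 and z ∈ ℝ⁶, the function U(x) = c (λ/(1+λ²|x−z|²))² on ℝ⁶ satisfies, for every x ∈ ℝ⁶, the exact identity (|x|^{−4} ∗ U²)(x) = ∫_{ℝ⁶} U(y)² |x−y|^{−4} dy = (π³/6) c · U(x). -/

import Mathlib

open MeasureTheory Real Set
open scoped RealInnerProductSpace

noncomputable section

abbrev E6 := EuclideanSpace ℝ (Fin 6)

/-- inversion -/
def inv6 (w : E6) : E6 := (‖w‖ ^ 2)⁻¹ • w

/-- its derivative -/
def A6 (w : E6) : E6 →L[ℝ] E6 :=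
  (‖w‖ ^ 2)⁻¹ • ContinuousLinearMap.id ℝ E6 +
    ((-((‖w‖ ^ 2) ^ 2)⁻¹ : ℝ) • (2 • (innerSL ℝ w))).smulRight w

lemma hasFDerivAt_inv6 {w : E6} (hw : w ≠ 0) : HasFDerivAt inv6 (A6 w) w := by
  have h1 : HasFDerivAt (fun x : E6 => ‖x‖ ^ 2) (2 • (innerSL ℝ w)) w :=
    (hasStrictFDerivAt_norm_sq w).hasFDerivAt
  have h2 : HasFDerivAt (fun x : E6 => (‖x‖ ^ 2)⁻¹)
      ((-((‖w‖ ^ 2) ^ 2)⁻¹ : ℝ) • (2 • (innerSL ℝ w))) w :=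
    (hasDerivAt_inv (pow_ne_zero 2 (norm_ne_zero_iff.2 hw))).comp_hasFDerivAt w h1
  exact h2.smul (hasFDerivAt_id w)

/-- the reflection part -/
def R6 (w : E6) : E6 →L[ℝ] E6 :=
  ContinuousLinearMap.id ℝ E6 - ((2 * (‖w‖ ^ 2)⁻¹ : ℝ) • (innerSL ℝ w)).smulRight w

lemma R6_apply (w x : E6) : R6 w x = x - (2 * (‖w‖ ^ 2)⁻¹ * ⟪w, x⟫) • w := by
  simp [R6, ContinuousLinearMap.smulRight_apply, ContinuousLinearMap.smul_apply,
    smul_smul]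

lemma A6_eq (w : E6) : A6 w = (‖w‖ ^ 2)⁻¹ • R6 w := by
  ext1 x
  have : A6 w x = (‖w‖ ^ 2)⁻¹ • x + (-((‖w‖ ^ 2) ^ 2)⁻¹ * (2 * ⟪w, x⟫)) • w := by
    simp [A6, ContinuousLinearMap.smulRight_apply, ContinuousLinearMap.smul_apply,
      smul_smul]
  rw [this, ContinuousLinearMap.smul_apply, R6_apply, smul_sub, smul_smul]
  match_scalars <;> ring

lemma R6_invol {w : E6} (hw : w ≠ 0) : ∀ x, R6 w (R6 w x) = x := by
  have hn : (‖w‖ ^ 2 : ℝ) ≠ 0 := pow_ne_zero 2 (norm_ne_zero_iff.2 hw)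
  intro x
  have hinner : ⟪w, x - (2 * (‖w‖ ^ 2)⁻¹ * ⟪w, x⟫) • w⟫ = -⟪w, x⟫ := by
    rw [inner_sub_right, real_inner_smul_right, real_inner_self_eq_norm_sq]
    field_simp
    ring
  rw [R6_apply, R6_apply, hinner]
  match_scalars <;> field_simp <;> ring

lemma abs_det_R6 {w : E6} (hw : w ≠ 0) : |(R6 w).det| = 1 := by
  have hcomp : (R6 w).comp (R6 w) = ContinuousLinearMap.id ℝ E6 :=
    ContinuousLinearMap.ext (R6_invol hw)
  have h : (R6 w).det * (R6 w).det = 1 := by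
    have := congrArg ContinuousLinearMap.det hcomp
    simpa [ContinuousLinearMap.det, LinearMap.det_comp] using this
  rcases mul_self_eq_one_iff.1 h with h1 | h1 <;> simp [h1]

lemma abs_det_A6 {w : E6} (hw : w ≠ 0) : |(A6 w).det| = (‖w‖ ^ 12)⁻¹ := by
  have h : (A6 w).det = ((‖w‖ ^ 2)⁻¹) ^ 6 * (R6 w).det := by
    rw [A6_eq]
    simp [ContinuousLinearMap.det, ContinuousLinearMap.coe_smul, LinearMap.det_smul,
      finrank_euclideanSpace]
  rw [h, abs_mul, abs_det_R6 hw, mul_one, abs_of_nonneg (by positivity)]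
  rw [inv_pow, ← pow_mul]

lemma inv6_norm {w : E6} (hw : w ≠ 0) : ‖inv6 w‖ = ‖w‖⁻¹ := by
  have h : ‖w‖ ≠ 0 := norm_ne_zero_iff.2 hw
  rw [inv6, norm_smul, Real.norm_eq_abs, abs_of_nonneg (by positivity)]
  field_simp

lemma inv6_ne_zero {w : E6} (hw : w ≠ 0) : inv6 w ≠ 0 := by
  intro h
  apply hw
  have h2 := congrArg (fun u : E6 => (‖w‖ ^ 2 : ℝ) • u) h
  simpa [inv6, smul_smul, pow_ne_zero 2 (norm_ne_zero_iff.2 hw)] using h2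

lemma inv6_invol {w : E6} (hw : w ≠ 0) : inv6 (inv6 w) = w := by
  have h : ‖w‖ ≠ 0 := norm_ne_zero_iff.2 hw
  have key : ((‖inv6 w‖ ^ 2 : ℝ))⁻¹ = ‖w‖ ^ 2 := by
    rw [inv6_norm hw]; field_simp
  calc inv6 (inv6 w) = (‖inv6 w‖ ^ 2)⁻¹ • inv6 w := rfl
    _ = (‖w‖ ^ 2) • ((‖w‖ ^ 2)⁻¹ • w) := by rw [key]; rfl
    _ = w := by
        rw [smul_smul]
        have h2 : (‖w‖ ^ 2 : ℝ) * (‖w‖ ^ 2)⁻¹ = 1 := by field_simp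
        rw [h2, one_smul]

lemma integral_rpow_bubble : ∫ y in Ioi (0:ℝ), y ^ 5 * ((1 + y ^ 2) ^ 4)⁻¹ = 1 / 6 := by
  have hne : ∀ y : ℝ, (6 * (1 + y ^ 2) ^ 3 : ℝ) ≠ 0 := fun y => by positivity
  set G : ℝ → ℝ := fun y => y ^ 6 / (6 * (1 + y ^ 2) ^ 3) with hG
  have hGcont : Continuous G :=
    Continuous.div (by continuity) (by continuity) hne
  have hderiv : ∀ y ∈ Ioi (0:ℝ), HasDerivAt G (y ^ 5 * ((1 + y ^ 2) ^ 4)⁻¹) y := by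
    intro y _
    have hu : HasDerivAt (fun y : ℝ => y ^ 6) (6 * y ^ 5) y := by
      simpa using hasDerivAt_pow 6 y
    have hv : HasDerivAt (fun y : ℝ => 6 * (1 + y ^ 2) ^ 3)
        (6 * (3 * (1 + y ^ 2) ^ 2 * (2 * y))) y := by
      have h1 : HasDerivAt (fun y : ℝ => 1 + y ^ 2) (2 * y) y := by
        simpa using (hasDerivAt_pow 2 y).const_add 1
      exact (h1.pow 3).const_mul 6
    have := hu.div hv (hne y)
    refine this.congr_deriv ?_
    field_simp
    ring
  have htend : Filter.Tendsto G Filter.atTop (nhds (1 / 6)) := by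
    have h1 : Filter.Tendsto (fun y : ℝ => (6 * ((y⁻¹) ^ 2 + 1) ^ 3)⁻¹)
        Filter.atTop (nhds (1 / 6)) := by
      have h2 : Filter.Tendsto (fun y : ℝ => y⁻¹) Filter.atTop (nhds 0) :=
        tendsto_inv_atTop_zero
      have h3 : Filter.Tendsto (fun y : ℝ => 6 * ((y⁻¹) ^ 2 + 1) ^ 3)
          Filter.atTop (nhds 6) := by
        have := ((h2.pow 2).add_const 1).pow 3 |>.const_mul (6:ℝ)
        simpa using this
      have := h3.inv₀ (by norm_num)
      simpa using this
    apply h1.congr'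
    filter_upwards [Filter.eventually_gt_atTop (0:ℝ)] with y hy
    have hy' : y ≠ 0 := ne_of_gt hy
    rw [hG]
    field_simp
  have := integral_Ioi_of_hasDerivAt_of_nonneg hGcont.continuousWithinAt hderiv
    (fun y hy => by have h0 := le_of_lt (mem_Ioi.mp hy); positivity) htend
  rw [this, hG]
  norm_num

end

noncomputable section

lemma volume_ball6 : (volume (Metric.ball (0 : E6) 1)).toReal = π ^ 3 / 6 := by
  rw [EuclideanSpace.volume_ball]
  have hπ : (Real.sqrt π) ^ (Fintype.card (Fin 6)) = π ^ 3 := by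
    simp only [Fintype.card_fin]
    rw [show (6 : ℕ) = 2 * 3 from rfl, pow_mul, Real.sq_sqrt pi_nonneg]
  have hΓ : Real.Gamma ((Fintype.card (Fin 6) : ℝ) / 2 + 1) = 6 := by
    have h4 : ((Fintype.card (Fin 6) : ℝ)) / 2 + 1 = 4 := by
      simp only [Fintype.card_fin]; norm_num
    rw [h4, show (4 : ℝ) = (3 : ℕ) + 1 by norm_num, Real.Gamma_nat_eq_factorial]
    norm_num [Nat.factorial]
  rw [hπ, hΓ]
  simp [ENNReal.toReal_ofReal (by positivity : (0:ℝ) ≤ π ^ 3 / 6)]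

lemma integral_K : ∫ u : E6, ((1 + ‖u‖ ^ 2) ^ 4)⁻¹ = π ^ 3 / 6 := by
  have h := integral_fun_norm_addHaar (volume : Measure E6)
    (fun y : ℝ => ((1 + y ^ 2) ^ 4)⁻¹)
  rw [h]
  simp only [finrank_euclideanSpace, Fintype.card_fin, measureReal_def, volume_ball6, smul_eq_mul,
    nsmul_eq_mul]
  have h2 : ∫ y in Ioi (0:ℝ), y ^ (6 - 1) * ((1 + y ^ 2) ^ 4)⁻¹
      = ∫ y in Ioi (0:ℝ), y ^ 5 * ((1 + y ^ 2) ^ 4)⁻¹ := by norm_num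
  rw [h2, integral_rpow_bubble]
  ring

end

noncomputable section

lemma Q_eq (v w : E6) :
    (1 + ‖v‖ ^ 2) * ‖w‖ ^ 2 + 2 * ⟪v, w⟫ + 1
      = (1 + ‖v‖ ^ 2) * ‖w + (1 + ‖v‖ ^ 2)⁻¹ • v‖ ^ 2 + (1 + ‖v‖ ^ 2)⁻¹ := by
  have ha : (0:ℝ) < 1 + ‖v‖ ^ 2 := by positivity
  rw [norm_add_sq_real, real_inner_smul_right, norm_smul, Real.norm_eq_abs,
    abs_of_nonneg (by positivity), mul_pow, real_inner_comm v w]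
  field_simp
  ring

lemma Q_pos (v w : E6) : (0:ℝ) < (1 + ‖v‖ ^ 2) * ‖w‖ ^ 2 + 2 * ⟪v, w⟫ + 1 := by
  rw [Q_eq]
  positivity

lemma stepA (v : E6) :
    ∫ y : E6, ((1 + ‖y‖ ^ 2) ^ 4)⁻¹ * (‖v - y‖ ^ 4)⁻¹
      = ∫ w : E6, (((1 + ‖v‖ ^ 2) * ‖w‖ ^ 2 + 2 * ⟪v, w⟫ + 1) ^ 4)⁻¹ := by
  set g : E6 → ℝ := fun y => ((1 + ‖y‖ ^ 2) ^ 4)⁻¹ * (‖v - y‖ ^ 4)⁻¹ with hg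
  have himg : (fun w : E6 => v + inv6 w) '' ({0}ᶜ) = ({v}ᶜ : Set E6) := by
    ext y
    simp only [mem_image, mem_compl_iff, mem_singleton_iff]
    constructor
    · rintro ⟨w, hw, rfl⟩
      intro hcon
      exact inv6_ne_zero hw (by simpa using hcon)
    · intro hy
      refine ⟨inv6 (y - v), inv6_ne_zero (sub_ne_zero.2 hy), ?_⟩
      rw [inv6_invol (sub_ne_zero.2 hy)]
      abel
  have hinj : InjOn (fun w : E6 => v + inv6 w) ({0}ᶜ) := by
    intro w1 h1 w2 h2 h
    have h' : inv6 w1 = inv6 w2 := by simpa using h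
    have := congrArg inv6 h'
    rwa [inv6_invol (by simpa using h1), inv6_invol (by simpa using h2)] at this
  have hder : ∀ w ∈ ({0}ᶜ : Set E6),
      HasFDerivWithinAt (fun w : E6 => v + inv6 w) (A6 w) ({0}ᶜ) w := fun w hw =>
    ((hasFDerivAt_inv6 (by simpa using hw)).const_add v).hasFDerivWithinAt
  have hcov := integral_image_eq_integral_abs_det_fderiv_smul volume
    (measurableSet_singleton (0:E6)).compl hder hinj g
  rw [himg] at hcov
  have hpt : ∀ w ∈ ({0}ᶜ : Set E6), |(A6 w).det| • g (v + inv6 w)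
      = (((1 + ‖v‖ ^ 2) * ‖w‖ ^ 2 + 2 * ⟪v, w⟫ + 1) ^ 4)⁻¹ := by
    intro w hw
    have hw0 : w ≠ 0 := by simpa using hw
    have hn : ‖w‖ ≠ 0 := norm_ne_zero_iff.2 hw0
    have h1 : ‖v - (v + inv6 w)‖ = ‖w‖⁻¹ := by
      rw [show v - (v + inv6 w) = -(inv6 w) by abel, norm_neg, inv6_norm hw0]
    have h2 : 1 + ‖v + inv6 w‖ ^ 2
        = ((1 + ‖v‖ ^ 2) * ‖w‖ ^ 2 + 2 * ⟪v, w⟫ + 1) * (‖w‖ ^ 2)⁻¹ := by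
      rw [norm_add_sq_real, inv6, real_inner_smul_right, norm_smul, Real.norm_eq_abs,
        abs_of_nonneg (by positivity), mul_pow]
      field_simp
      ring
    show (|(A6 w).det|) * (((1 + ‖v + inv6 w‖ ^ 2) ^ 4)⁻¹ * (‖v - (v + inv6 w)‖ ^ 4)⁻¹)
        = (((1 + ‖v‖ ^ 2) * ‖w‖ ^ 2 + 2 * ⟪v, w⟫ + 1) ^ 4)⁻¹
    rw [abs_det_A6 hw0, h1, h2]
    have haux : ∀ Q n : ℝ, n ≠ 0 →
        (n ^ 12)⁻¹ * (((Q * (n ^ 2)⁻¹) ^ 4)⁻¹ * ((n⁻¹) ^ 4)⁻¹) = (Q ^ 4)⁻¹ := by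
      intro Q n hn
      field_simp
    exact haux _ _ hn
  calc ∫ y : E6, g y = ∫ y in ({v}ᶜ : Set E6), g y := by
        rw [MeasureTheory.restrict_compl_singleton]
    _ = ∫ w in ({0}ᶜ : Set E6), |(A6 w).det| • g (v + inv6 w) := hcov
    _ = ∫ w in ({0}ᶜ : Set E6), (((1 + ‖v‖ ^ 2) * ‖w‖ ^ 2 + 2 * ⟪v, w⟫ + 1) ^ 4)⁻¹ :=
        setIntegral_congr_fun (measurableSet_singleton (0:E6)).compl hpt
    _ = ∫ w : E6, (((1 + ‖v‖ ^ 2) * ‖w‖ ^ 2 + 2 * ⟪v, w⟫ + 1) ^ 4)⁻¹ := by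
        rw [MeasureTheory.restrict_compl_singleton]

end

noncomputable section

lemma stepBC (v : E6) :
    ∫ w : E6, (((1 + ‖v‖ ^ 2) * ‖w‖ ^ 2 + 2 * ⟪v, w⟫ + 1) ^ 4)⁻¹
      = π ^ 3 / 6 * ((1 + ‖v‖ ^ 2) ^ 2)⁻¹ := by
  set a : ℝ := 1 + ‖v‖ ^ 2 with ha
  have ha0 : (0:ℝ) < a := by positivity
  set F : E6 → ℝ := fun u => ((a * ‖u‖ ^ 2 + a⁻¹) ^ 4)⁻¹ with hF
  have hstep1 : ∫ w : E6, (((1 + ‖v‖ ^ 2) * ‖w‖ ^ 2 + 2 * ⟪v, w⟫ + 1) ^ 4)⁻¹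
      = ∫ w : E6, F (w + a⁻¹ • v) := by
    congr 1
    funext w
    rw [hF]
    simp only
    rw [← Q_eq]
  have hstep2 : ∫ w : E6, F (w + a⁻¹ • v) = ∫ u : E6, F u :=
    integral_add_right_eq_self F (a⁻¹ • v)
  have hscale := MeasureTheory.Measure.integral_comp_smul (volume : Measure E6) F a⁻¹
  have hlhs : (fun x : E6 => F (a⁻¹ • x)) = fun x : E6 => a ^ 4 * ((1 + ‖x‖ ^ 2) ^ 4)⁻¹ := by
    funext x
    rw [hF]
    simp only
    rw [norm_smul, Real.norm_eq_abs, abs_of_nonneg (by positivity), mul_pow]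
    have h1 : a * ((a⁻¹) ^ 2 * ‖x‖ ^ 2) + a⁻¹ = a⁻¹ * (1 + ‖x‖ ^ 2) := by
      field_simp
      ring
    rw [h1, mul_pow, mul_inv, inv_pow, inv_inv]
  rw [hlhs] at hscale
  rw [MeasureTheory.integral_const_mul, integral_K] at hscale
  have habs : |((a⁻¹ : ℝ) ^ Module.finrank ℝ E6)⁻¹| = a ^ 6 := by
    rw [finrank_euclideanSpace]
    simp only [Fintype.card_fin]
    rw [inv_pow, inv_inv, abs_of_nonneg (by positivity)]
  rw [habs, smul_eq_mul] at hscale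
  have hint : ∫ u : E6, F u = a ^ 4 * (π ^ 3 / 6) / a ^ 6 := by
    field_simp at hscale ⊢
    linarith [hscale]
  rw [hstep1, hstep2, hint]
  have h6 : (a:ℝ) ^ 6 = a ^ 4 * a ^ 2 := by ring
  rw [h6]
  field_simp

lemma key (v : E6) :
    ∫ y : E6, ((1 + ‖y‖ ^ 2) ^ 4)⁻¹ * (‖v - y‖ ^ 4)⁻¹
      = π ^ 3 / 6 * ((1 + ‖v‖ ^ 2) ^ 2)⁻¹ := by
  rw [stepA, stepBC]

end


/-- **The Riesz potential of order 2 reproduces the bubble.**  For `c, λ > 0`, `z ∈ ℝ⁶`,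
the function `U x = c (λ/(1+λ²|x-z|²))²` satisfies
`∫ U(y)² |x-y|^(-4) dy = (π³/6) c U(x)` for every `x ∈ ℝ⁶`. -/
theorem riesz_potential_of_bubble_sq (c l : ℝ) (hc : 0 < c) (hl : 0 < l)
    (z x : EuclideanSpace ℝ (Fin 6)) :
    ∫ y : EuclideanSpace ℝ (Fin 6),
        (c * (l / (1 + l ^ 2 * ‖y - z‖ ^ 2)) ^ 2) ^ 2 / ‖x - y‖ ^ 4 =
      (π ^ 3 / 6) * c * (c * (l / (1 + l ^ 2 * ‖x - z‖ ^ 2)) ^ 2) := by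
  have hl' : (l:ℝ) ≠ 0 := ne_of_gt hl
  set f : E6 → ℝ := fun y =>
    ((1 + l ^ 2 * ‖y‖ ^ 2) ^ 4)⁻¹ * (‖(x - z) - y‖ ^ 4)⁻¹ with hf
  set v : E6 := l • (x - z) with hv
  have hvn : ‖v‖ ^ 2 = l ^ 2 * ‖x - z‖ ^ 2 := by
    rw [hv, norm_smul, Real.norm_eq_abs, abs_of_pos hl, mul_pow]
  -- rewrite the integrand
  have hpt : (fun y : E6 => (c * (l / (1 + l ^ 2 * ‖y - z‖ ^ 2)) ^ 2) ^ 2 / ‖x - y‖ ^ 4)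
      = fun y : E6 => c ^ 2 * l ^ 4 * f (y - z) := by
    funext y
    rw [hf]
    simp only
    rw [show (x - z) - (y - z) = x - y by abel]
    have hD : (0:ℝ) < 1 + l ^ 2 * ‖y - z‖ ^ 2 := by positivity
    by_cases hxy : ‖x - y‖ = 0
    · simp [hxy]
    · field_simp
  rw [hpt, MeasureTheory.integral_const_mul]
  have htrans : ∫ y : E6, f (y - z) = ∫ y : E6, f y :=
    integral_sub_right_eq_self f z
  rw [htrans]
  -- scaling
  have hscale := MeasureTheory.Measure.integral_comp_smul (volume : Measure E6) f l⁻¹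
  have hlhs : (fun u : E6 => f (l⁻¹ • u))
      = fun u : E6 => l ^ 4 * (((1 + ‖u‖ ^ 2) ^ 4)⁻¹ * (‖v - u‖ ^ 4)⁻¹) := by
    funext u
    rw [hf]
    simp only
    have h1 : l ^ 2 * ‖l⁻¹ • u‖ ^ 2 = ‖u‖ ^ 2 := by
      rw [norm_smul, Real.norm_eq_abs, abs_of_pos (inv_pos.2 hl), mul_pow]
      field_simp
    have h2 : (x - z) - l⁻¹ • u = l⁻¹ • (v - u) := by
      rw [hv, smul_sub, smul_smul, inv_mul_cancel₀ hl', one_smul]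
    rw [h1, h2, norm_smul, Real.norm_eq_abs, abs_of_pos (inv_pos.2 hl), mul_pow]
    rw [mul_inv, inv_pow, inv_inv]
    ring
  rw [hlhs] at hscale
  rw [MeasureTheory.integral_const_mul, key v] at hscale
  have habs : |((l⁻¹ : ℝ) ^ Module.finrank ℝ E6)⁻¹| = l ^ 6 := by
    rw [finrank_euclideanSpace]
    simp only [Fintype.card_fin]
    rw [inv_pow, inv_inv, abs_of_pos (by positivity)]
  rw [habs, smul_eq_mul] at hscale
  have hint : ∫ y : E6, f y = l ^ 4 * (π ^ 3 / 6 * ((1 + ‖v‖ ^ 2) ^ 2)⁻¹) / l ^ 6 := by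
    field_simp at hscale ⊢
    linarith [hscale]
  rw [hint, hvn]
  have hD : (0:ℝ) < 1 + l ^ 2 * ‖x - z‖ ^ 2 := by positivity
  field_simp
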